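/- Let n ≥ 2, d₁,…,d_n ∈ ℝ, and let U ⊆ ℝⁿ be an open set all of whose points have pairwise distinct coordinates. Let β_ij (i ≠ j) be smooth functions on U satisfying (ED1) ∂_k β_ij = β_ik β_kj for pairwise distinct i,j,k, (ED2) e(β_ij) = 0 and (ED3) E(β_ij) = (d_i − d_j − 1)β_ij; set β_ii := 0 and define V_ij = (u^j − u^i)β_ij − (d_j − d₁)δ_ij and (W_{(k)})_{ij} = δ_{ik} β_kj − β_ik δ_{kj}. If H = (H₁,…,H_n)ᵀ is a smooth solution of ∂_k H = −W_{(k)} H for all k (equivalently, of the Lamé system (L1) ∂_j H_i = β_ij H_j for i ≠ j and (L2) e(H_i) = 0), then Ĥ := V H is also a solution of ∂_k Ĥ = −W_{(k)} Ĥ for all k. -/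

import Mathlib

/-- Partial derivative `∂_i f` of a function `f : ℝⁿ → ℝ` at `x`. -/
noncomputable def pd {n : ℕ} (i : Fin n) (f : (Fin n → ℝ) → ℝ) (x : Fin n → ℝ) : ℝ :=
  fderiv ℝ f x (Pi.single i 1)

/-- The Lax matrix `V_ij = (u^j - u^i) β_ij - (d_j - d₁) δ_ij`. -/
noncomputable def Vmat {n : ℕ} (d : Fin n → ℝ) (d1 : ℝ)
    (β : Fin n → Fin n → (Fin n → ℝ) → ℝ) (x : Fin n → ℝ) :
    Matrix (Fin n) (Fin n) ℝ :=
  Matrix.of fun i j => (x j - x i) * β i j x - (d j - d1) * (if i = j then 1 else 0)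

/-- The matrices `(W_{(k)})_ij = δ_ik β_kj - β_ik δ_kj`. -/
noncomputable def Wmat {n : ℕ} (β : Fin n → Fin n → (Fin n → ℝ) → ℝ) (k : Fin n)
    (x : Fin n → ℝ) : Matrix (Fin n) (Fin n) ℝ :=
  Matrix.of fun i j => (if i = k then 1 else 0) * β k j x - β i k x * (if k = j then 1 else 0)

open Finset

section auxlem
variable {n : ℕ}

lemma diffAt_coord (j : Fin n) (x : Fin n → ℝ) :
    DifferentiableAt ℝ (fun y : Fin n → ℝ => y j) x :=
  (ContinuousLinearMap.proj j : (Fin n → ℝ) →L[ℝ] ℝ).differentiableAt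

lemma pd_coord (k j : Fin n) (x : Fin n → ℝ) :
    pd k (fun y => y j) x = if k = j then 1 else 0 := by
  have h : (fun y : Fin n → ℝ => y j) = ⇑(ContinuousLinearMap.proj j : (Fin n → ℝ) →L[ℝ] ℝ) := rfl
  rw [pd, h, ContinuousLinearMap.fderiv]
  simp [Pi.single_apply, eq_comm]

lemma pd_sub {f g : (Fin n → ℝ) → ℝ} {x : Fin n → ℝ} (k : Fin n)
    (hf : DifferentiableAt ℝ f x) (hg : DifferentiableAt ℝ g x) :
    pd k (fun y => f y - g y) x = pd k f x - pd k g x := by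
  rw [pd, fderiv_fun_sub hf hg]; rfl

lemma pd_add {f g : (Fin n → ℝ) → ℝ} {x : Fin n → ℝ} (k : Fin n)
    (hf : DifferentiableAt ℝ f x) (hg : DifferentiableAt ℝ g x) :
    pd k (fun y => f y + g y) x = pd k f x + pd k g x := by
  rw [pd, fderiv_fun_add hf hg]; rfl

lemma pd_mul {f g : (Fin n → ℝ) → ℝ} {x : Fin n → ℝ} (k : Fin n)
    (hf : DifferentiableAt ℝ f x) (hg : DifferentiableAt ℝ g x) :
    pd k (fun y => f y * g y) x = f x * pd k g x + g x * pd k f x := by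
  rw [pd, fderiv_fun_mul hf hg]; rfl

lemma pd_const_mul {f : (Fin n → ℝ) → ℝ} {x : Fin n → ℝ} (k : Fin n) (c : ℝ)
    (hf : DifferentiableAt ℝ f x) :
    pd k (fun y => c * f y) x = c * pd k f x := by
  rw [pd, fderiv_const_mul hf]; rfl

lemma pd_sum {ι : Type*} {s : Finset ι} {f : ι → (Fin n → ℝ) → ℝ} {x : Fin n → ℝ} (k : Fin n)
    (h : ∀ i ∈ s, DifferentiableAt ℝ (f i) x) :
    pd k (fun y => ∑ i ∈ s, f i y) x = ∑ i ∈ s, pd k (f i) x := by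
  rw [pd, fderiv_fun_sum h]; simp [pd]

end auxlem

theorem lax_matrix_acts_on_solutions {n : ℕ} (hn : 2 ≤ n) (d : Fin n → ℝ)
    (U : Set (Fin n → ℝ)) (hU : IsOpen U)
    (hdist : ∀ x ∈ U, ∀ i j : Fin n, i ≠ j → x i ≠ x j)
    (β : Fin n → Fin n → (Fin n → ℝ) → ℝ)
    (hβ : ∀ i j : Fin n, i ≠ j → ContDiffOn ℝ (⊤ : ℕ∞) (β i j) U)
    (hβdiag : ∀ i : Fin n, ∀ x ∈ U, β i i x = 0)
    (hED1 : ∀ i j k : Fin n, i ≠ j → j ≠ k → i ≠ k →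
      ∀ x ∈ U, pd k (β i j) x = β i k x * β k j x)
    (hED2 : ∀ i j : Fin n, i ≠ j → ∀ x ∈ U, ∑ l, pd l (β i j) x = 0)
    (hED3 : ∀ i j : Fin n, i ≠ j → ∀ x ∈ U,
      ∑ l, x l * pd l (β i j) x = (d i - d j - 1) * β i j x)
    (H : Fin n → (Fin n → ℝ) → ℝ)
    (hH : ∀ i, ContDiffOn ℝ (⊤ : ℕ∞) (H i) U)
    -- H solves ∂_k H = - W_{(k)} H  (equivalently, the Lamé system (L1),(L2))
    (hLax : ∀ k : Fin n, ∀ x ∈ U, ∀ i : Fin n,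
      pd k (H i) x = -∑ j, Wmat β k x i j * H j x) :
    -- Ĥ := V H is again a solution of ∂_k Ĥ = - W_{(k)} Ĥ
    ∀ k : Fin n, ∀ x ∈ U, ∀ i : Fin n,
      pd k (fun y => ∑ j, Vmat d (d ⟨0, by omega⟩) β y i j * H j y) x
        = -∑ j, Wmat β k x i j * (∑ m, Vmat d (d ⟨0, by omega⟩) β x j m * H m x) := by
  intro k x hx i
  have h0 : 0 < n := by omega
  show pd k (fun y => ∑ j, Vmat d (d ⟨0, h0⟩) β y i j * H j y) x
        = -∑ j, Wmat β k x i j * (∑ m, Vmat d (d ⟨0, h0⟩) β x j m * H m x)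
  set d1 : ℝ := d ⟨0, h0⟩ with hd1def
  have hmem : U ∈ nhds x := hU.mem_nhds hx
  have hDβ : ∀ p q : Fin n, p ≠ q → DifferentiableAt ℝ (β p q) x := fun p q hpq =>
    ((hβ p q hpq).differentiableOn (by simp)).differentiableAt hmem
  have hDH : ∀ j, DifferentiableAt ℝ (H j) x := fun j =>
    ((hH j).differentiableOn (by simp)).differentiableAt hmem
  -- the Lamé system, solved for pd k (H j) x
  have hP : ∀ j : Fin n, pd k (H j) x
      = -((if j = k then (1:ℝ) else 0) * ∑ m, β k m x * H m x) + β j k x * H k x := by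
    intro j
    rw [hLax k x hx j]
    have h2 : ∑ m, β j k x * ((if k = m then (1:ℝ) else 0) * H m x) = β j k x * H k x := by
      rw [← Finset.mul_sum]; congr 1; simp
    have h1 : ∑ m, Wmat β k x j m * H m x
        = (if j = k then (1:ℝ) else 0) * (∑ m, β k m x * H m x)
          - β j k x * H k x := by
      calc ∑ m, Wmat β k x j m * H m x
          = ∑ m, ((if j = k then (1:ℝ) else 0) * (β k m x * H m x)
              - β j k x * ((if k = m then (1:ℝ) else 0) * H m x)) := by
            refine Finset.sum_congr rfl fun m _ => ?_
            simp only [Wmat, Matrix.of_apply]; ring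
        _ = (if j = k then (1:ℝ) else 0) * (∑ m, β k m x * H m x)
              - β j k x * H k x := by
            rw [Finset.sum_sub_distrib, ← Finset.mul_sum, h2]
    rw [h1]; ring
  -- the value of Ĥ at x
  have hHhat : ∀ p : Fin n, ∑ m, Vmat d d1 β x p m * H m x
      = (∑ m, ((x m - x p) * β p m x) * H m x) - (d p - d1) * H p x := by
    intro p
    have h2 : ∑ m, (d m - d1) * ((if p = m then (1:ℝ) else 0) * H m x)
        = (d p - d1) * H p x := by
      simp
    calc ∑ m, Vmat d d1 β x p m * H m x
        = ∑ m, (((x m - x p) * β p m x) * H m x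
            - (d m - d1) * ((if p = m then (1:ℝ) else 0) * H m x)) := by
          refine Finset.sum_congr rfl fun m _ => ?_
          simp only [Vmat, Matrix.of_apply]; ring
      _ = _ := by rw [Finset.sum_sub_distrib, h2]
  -- rewrite Ĥ as a sum of differentiable terms
  have hfun : (fun y => ∑ j, Vmat d d1 β y i j * H j y)
      = fun y => (∑ j ∈ univ.erase i, ((y j - y i) * β i j y) * H j y)
          + (-(d i - d1)) * H i y := by
    funext y
    rw [← Finset.sum_erase_add _ _ (mem_univ i)]
    congr 1
    · refine Finset.sum_congr rfl fun j hj => ?_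
      have hij : i ≠ j := (Finset.ne_of_mem_erase hj).symm
      simp [Vmat, hij]
    · simp [Vmat]
  have hterm : ∀ j, i ≠ j → pd k (fun y => ((y j - y i) * β i j y) * H j y) x
      = (((if k = j then (1:ℝ) else 0) - (if k = i then 1 else 0)) * β i j x
          + (x j - x i) * pd k (β i j) x) * H j x
        + ((x j - x i) * β i j x) * pd k (H j) x := by
    intro j hij
    rw [pd_mul k (((diffAt_coord j x).fun_sub (diffAt_coord i x)).fun_mul (hDβ i j hij)) (hDH j),
      pd_mul k ((diffAt_coord j x).fun_sub (diffAt_coord i x)) (hDβ i j hij),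
      pd_sub k (diffAt_coord j x) (diffAt_coord i x), pd_coord, pd_coord]
    ring
  have hdiffterm : ∀ j ∈ univ.erase i,
      DifferentiableAt ℝ (fun y => ((y j - y i) * β i j y) * H j y) x := by
    intro j hj
    have hij : i ≠ j := (Finset.ne_of_mem_erase hj).symm
    exact (((diffAt_coord j x).sub (diffAt_coord i x)).mul (hDβ i j hij)).mul (hDH j)
  have hpd : pd k (fun y => ∑ j, Vmat d d1 β y i j * H j y) x
      = (∑ j ∈ univ.erase i,
          ((((if k = j then (1:ℝ) else 0) - (if k = i then 1 else 0)) * β i j x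
             + (x j - x i) * pd k (β i j) x) * H j x
           + ((x j - x i) * β i j x) * pd k (H j) x))
        + (-(d i - d1)) * pd k (H i) x := by
    rw [hfun, pd_add k (DifferentiableAt.fun_sum hdiffterm) ((hDH i).const_mul _),
      pd_sum k hdiffterm, pd_const_mul k _ (hDH i)]
    congr 1
    exact Finset.sum_congr rfl fun j hj => hterm j (Finset.ne_of_mem_erase hj).symm
  -- consequences of (ED1)-(ED3)
  have hEDsum : ∀ (p q : Fin n) (c : ℝ), p ≠ q →
      ∑ l, (x l - c) * pd l (β p q) x = (d p - d q - 1) * β p q x := by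
    intro p q c hpq
    have h2 := hED2 p q hpq x hx
    have h3 := hED3 p q hpq x hx
    calc ∑ l, (x l - c) * pd l (β p q) x
        = ∑ l, (x l * pd l (β p q) x - c * pd l (β p q) x) :=
          Finset.sum_congr rfl fun l _ => by ring
      _ = (d p - d q - 1) * β p q x := by
          rw [Finset.sum_sub_distrib, h3, ← Finset.mul_sum, h2, mul_zero, sub_zero]
  have hEDb : ∀ p q : Fin n, p ≠ q →
      (x q - x p) * pd q (β p q) x
        = (d p - d q - 1) * β p q x - ∑ l, (x l - x p) * (β p l x * β l q x) := by
    intro p q hpq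
    have hs := hEDsum p q (x p) hpq
    rw [← Finset.sum_erase_add _ _ (mem_univ q)] at hs
    have he : ∑ l ∈ univ.erase q, (x l - x p) * pd l (β p q) x
        = ∑ l, (x l - x p) * (β p l x * β l q x) := by
      rw [← Finset.sum_erase_add univ (fun l => (x l - x p) * (β p l x * β l q x))
        (mem_univ q), hβdiag q x hx, mul_zero, mul_zero, add_zero]
      refine Finset.sum_congr rfl fun l hl => ?_
      have hlq : l ≠ q := Finset.ne_of_mem_erase hl
      rcases eq_or_ne l p with rfl | hlp
      · rw [sub_self, zero_mul, zero_mul]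
      · rw [hED1 p q l hpq (Ne.symm hlq) (Ne.symm hlp) x hx]
    linarith [hs, he]
  have hEDa : ∀ p q : Fin n, p ≠ q →
      (x p - x q) * pd p (β p q) x
        = (d p - d q - 1) * β p q x - ∑ l, (x l - x q) * (β p l x * β l q x) := by
    intro p q hpq
    have hs := hEDsum p q (x q) hpq
    rw [← Finset.sum_erase_add _ _ (mem_univ p)] at hs
    have he : ∑ l ∈ univ.erase p, (x l - x q) * pd l (β p q) x
        = ∑ l, (x l - x q) * (β p l x * β l q x) := by
      rw [← Finset.sum_erase_add univ (fun l => (x l - x q) * (β p l x * β l q x))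
        (mem_univ p), hβdiag p x hx, zero_mul, mul_zero, add_zero]
      refine Finset.sum_congr rfl fun l hl => ?_
      have hlp : l ≠ p := Finset.ne_of_mem_erase hl
      rcases eq_or_ne l q with rfl | hlq
      · rw [sub_self, zero_mul, zero_mul]
      · rw [hED1 p q l hpq (Ne.symm hlq) (Ne.symm hlp) x hx]
    linarith [hs, he]
  have hbii : β i i x = 0 := hβdiag i x hx
  rcases eq_or_ne i k with rfl | hik
  · -- case k = i
    rw [hpd]
    have e2 : (if i = i then (1:ℝ) else 0) = 1 := if_pos rfl
    have hA : ∀ j ∈ univ.erase i,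
        ((((if i = j then (1:ℝ) else 0) - if i = i then 1 else 0) * β i j x
            + (x j - x i) * pd i (β i j) x) * H j x
          + (x j - x i) * β i j x * pd i (H j) x)
        = (((d j - d i) * β i j x) * H j x + ((x j - x i) * β i j x) * (β j i x * H i x))
          + (∑ l, (x l - x j) * (β i l x * β l j x)) * H j x := by
      intro j hj
      have hji : j ≠ i := Finset.ne_of_mem_erase hj
      have e1 : (if i = j then (1:ℝ) else 0) = 0 := if_neg (Ne.symm hji)
      have e3 : (if j = i then (1:ℝ) else 0) = 0 := if_neg hji
      rw [hP j, e1, e2, e3]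
      linear_combination (-(H j x)) * (hEDa i j (Ne.symm hji))
    rw [Finset.sum_congr rfl hA, Finset.sum_add_distrib, hP i, e2, hbii]
    have hg1 : ∑ j ∈ univ.erase i,
        (((d j - d i) * β i j x) * H j x + ((x j - x i) * β i j x) * (β j i x * H i x))
        = ∑ j, (((d j - d i) * β i j x) * H j x
            + ((x j - x i) * β i j x) * (β j i x * H i x)) := by
      rw [← Finset.sum_erase_add univ
        (fun j => ((d j - d i) * β i j x) * H j x
          + ((x j - x i) * β i j x) * (β j i x * H i x)) (mem_univ i)]
      simp [hbii]
    have hg2 : ∑ j ∈ univ.erase i, (∑ l, (x l - x j) * (β i l x * β l j x)) * H j x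
        = (∑ j, (∑ l, (x l - x j) * (β i l x * β l j x)) * H j x)
          - (∑ l, (x l - x i) * (β i l x * β l i x)) * H i x := by
      rw [← Finset.sum_erase_add univ
        (fun j => (∑ l, (x l - x j) * (β i l x * β l j x)) * H j x) (mem_univ i)]
      ring
    rw [hg1, hg2]
    have hRHS : ∑ j, Wmat β i x i j * (∑ m, Vmat d d1 β x j m * H m x)
        = ∑ j, β i j x * ((∑ m, (x m - x j) * β j m x * H m x) - (d j - d1) * H j x) := by
      refine Finset.sum_congr rfl fun j _ => ?_
      rw [hHhat j]
      simp only [Wmat, Matrix.of_apply, eq_self_iff_true, if_true, hbii]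
      ring
    rw [hRHS]
    have hRsplit : ∑ j, β i j x * ((∑ m, (x m - x j) * β j m x * H m x) - (d j - d1) * H j x)
        = (∑ j, β i j x * (∑ m, (x m - x j) * β j m x * H m x))
          - ∑ j, β i j x * ((d j - d1) * H j x) := by
      rw [← Finset.sum_sub_distrib]
      exact Finset.sum_congr rfl fun j _ => by ring
    rw [hRsplit]
    have hswap : ∑ j, (∑ l, (x l - x j) * (β i l x * β l j x)) * H j x
        = -∑ j, β i j x * (∑ m, (x m - x j) * β j m x * H m x) := by
      calc ∑ j, (∑ l, (x l - x j) * (β i l x * β l j x)) * H j x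
          = ∑ j, ∑ l, ((x l - x j) * (β i l x * β l j x)) * H j x :=
            Finset.sum_congr rfl fun j _ => by rw [Finset.sum_mul]
        _ = ∑ l, ∑ j, ((x l - x j) * (β i l x * β l j x)) * H j x := Finset.sum_comm
        _ = ∑ l, -(β i l x * (∑ m, (x m - x l) * β l m x * H m x)) := by
            refine Finset.sum_congr rfl fun l _ => ?_
            rw [Finset.mul_sum, ← Finset.sum_neg_distrib]
            exact Finset.sum_congr rfl fun m _ => by ring
        _ = -∑ j, β i j x * (∑ m, (x m - x j) * β j m x * H m x) := by
            rw [Finset.sum_neg_distrib]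
    have hg1split : ∑ j, (((d j - d i) * β i j x) * H j x
          + ((x j - x i) * β i j x) * (β j i x * H i x))
        = ((∑ j, β i j x * ((d j - d1) * H j x)) + (d1 - d i) * ∑ m, β i m x * H m x)
          + (∑ l, (x l - x i) * (β i l x * β l i x)) * H i x := by
      rw [Finset.sum_add_distrib]
      congr 1
      · rw [Finset.mul_sum, ← Finset.sum_add_distrib]
        exact Finset.sum_congr rfl fun j _ => by ring
      · rw [Finset.sum_mul]
        exact Finset.sum_congr rfl fun j _ => by ring
    rw [hg1split]
    linear_combination hswap
  · -- case i ≠ k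
    rw [hpd]
    have hbkk : β k k x = 0 := hβdiag k x hx
    have hki : k ∈ univ.erase i := Finset.mem_erase.mpr ⟨Ne.symm hik, mem_univ k⟩
    rw [← Finset.sum_erase_add (univ.erase i) _ hki]
    have eki : (if k = i then (1:ℝ) else 0) = 0 := if_neg (Ne.symm hik)
    have ekk : (if k = k then (1:ℝ) else 0) = 1 := if_pos rfl
    have eik : (if i = k then (1:ℝ) else 0) = 0 := if_neg hik
    have hA2 : ∀ j ∈ (univ.erase i).erase k,
        ((((if k = j then (1:ℝ) else 0) - if k = i then 1 else 0) * β i j x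
            + (x j - x i) * pd k (β i j) x) * H j x
          + (x j - x i) * β i j x * pd k (H j) x)
        = ((x j - x i) * (β i k x * β k j x)) * H j x
          + ((x j - x i) * β i j x) * (β j k x * H k x) := by
      intro j hj
      have hjk : j ≠ k := Finset.ne_of_mem_erase hj
      have hij : i ≠ j := (Finset.ne_of_mem_erase (Finset.mem_of_mem_erase hj)).symm
      have e1 : (if k = j then (1:ℝ) else 0) = 0 := if_neg (Ne.symm hjk)
      have e3 : (if j = k then (1:ℝ) else 0) = 0 := if_neg hjk
      rw [hP j, e1, e3, eki, hED1 i j k hij hjk hik x hx]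
      ring
    rw [Finset.sum_congr rfl hA2]
    have hext : ∑ j ∈ (univ.erase i).erase k,
        (((x j - x i) * (β i k x * β k j x)) * H j x
          + ((x j - x i) * β i j x) * (β j k x * H k x))
        = ∑ j, (((x j - x i) * (β i k x * β k j x)) * H j x
          + ((x j - x i) * β i j x) * (β j k x * H k x)) := by
      rw [← Finset.sum_erase_add univ
        (fun j => ((x j - x i) * (β i k x * β k j x)) * H j x
          + ((x j - x i) * β i j x) * (β j k x * H k x)) (mem_univ i),
        ← Finset.sum_erase_add (univ.erase i)
        (fun j => ((x j - x i) * (β i k x * β k j x)) * H j x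
          + ((x j - x i) * β i j x) * (β j k x * H k x)) hki]
      simp [hbkk, hbii]
    rw [hext, Finset.sum_add_distrib]
    have key1 : ∑ j, ((x j - x i) * (β i k x * β k j x)) * H j x
        = β i k x * (∑ m, (x m - x k) * β k m x * H m x)
          + ((x k - x i) * β i k x) * ∑ m, β k m x * H m x := by
      rw [Finset.mul_sum, Finset.mul_sum, ← Finset.sum_add_distrib]
      exact Finset.sum_congr rfl fun j _ => by ring
    have key2 : ∑ j, ((x j - x i) * β i j x) * (β j k x * H k x)
        = (∑ l, (x l - x i) * (β i l x * β l k x)) * H k x := by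
      rw [Finset.sum_mul]
      exact Finset.sum_congr rfl fun j _ => by ring
    rw [key1, key2, hP k, hP i, ekk, eki, eik, hbkk]
    have hRHS2 : ∑ j, Wmat β k x i j * (∑ m, Vmat d d1 β x j m * H m x)
        = -(β i k x * ((∑ m, (x m - x k) * β k m x * H m x) - (d k - d1) * H k x)) := by
      calc ∑ j, Wmat β k x i j * (∑ m, Vmat d d1 β x j m * H m x)
          = ∑ j, -(β i k x * ((if k = j then (1:ℝ) else 0)
              * (∑ m, Vmat d d1 β x j m * H m x))) := by
            refine Finset.sum_congr rfl fun j _ => ?_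
            simp only [Wmat, Matrix.of_apply, eik]
            ring
        _ = -(β i k x * ∑ j, (if k = j then (1:ℝ) else 0)
              * (∑ m, Vmat d d1 β x j m * H m x)) := by
            rw [Finset.sum_neg_distrib, ← Finset.mul_sum]
        _ = -(β i k x * (∑ m, Vmat d d1 β x k m * H m x)) := by
            have : ∑ j, (if k = j then (1:ℝ) else 0) * (∑ m, Vmat d d1 β x j m * H m x)
                = ∑ m, Vmat d d1 β x k m * H m x := by simp
            rw [this]
        _ = _ := by rw [hHhat k]
    rw [hRHS2]
    linear_combination (H k x) * (hEDb i k hik)
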